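/- If a set of n unit vectors in F^m has coherence μ < 1 attained by some pair, and the vectors span a proper subspace H of dimension m − k (with n ≥ m + k and k ≥ 1), then there exists a set of n unit vectors spanning all of F^m whose coherence is at most μ; hence the minimal coherence over spanning sets (frames) equals the minimal coherence over all n-tuples of unit vectors. -/

import Mathlib

open scoped InnerProductSpace

/-- The coherence of a family of vectors: the supremum of absolute pairwise inner products. -/
noncomputable def coherence (𝕜 : Type*) {E : Type*} [RCLike 𝕜] [NormedAddCommGroup E]
    [InnerProductSpace 𝕜 E] {n : ℕ} (φ : Fin n → E) : ℝ :=
  sSup {r : ℝ | ∃ j l : Fin n, j ≠ l ∧ r = ‖(⟪φ j, φ l⟫_𝕜 : 𝕜)‖}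

/-!
Let `H` be the span of the unit vectors `φ j`. Keep indices of a basis of `H` chosen among the
`φ j`; since `n ≥ m`, at least `dim Hᗮ` other indices remain, and the vectors there are replaced
by an orthonormal basis of `Hᗮ`. The new family spans `H ⊔ Hᗮ = F^m`, and every pairwise inner
product is either an old one or vanishes, because the new vectors are orthonormal and orthogonal
to `H`. So coherence does not increase; as this applies to every tuple of unit vectors, the
infimum of the coherence over frames is the infimum over all tuples.
-/

open Function Module Submodule

section Coherence

variable {𝕜 E : Type*} [RCLike 𝕜] [NormedAddCommGroup E] [InnerProductSpace 𝕜 E] {n : ℕ}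

lemma norm_inner_le_coherence (ψ : Fin n → E) {j l : Fin n} (hjl : j ≠ l) :
    ‖(⟪ψ j, ψ l⟫_𝕜 : 𝕜)‖ ≤ coherence 𝕜 ψ := by
  refine le_csSup ?_ ⟨j, l, hjl, rfl⟩
  refine ((Set.finite_range fun p : Fin n × Fin n => ‖(⟪ψ p.1, ψ p.2⟫_𝕜 : 𝕜)‖).subset ?_).bddAbove
  rintro _ ⟨j, l, -, rfl⟩
  exact ⟨(j, l), rfl⟩

lemma coherence_nonneg (ψ : Fin n → E) : 0 ≤ coherence 𝕜 ψ :=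
  Real.sSup_nonneg <| by rintro _ ⟨j, l, -, rfl⟩; exact norm_nonneg _

lemma coherence_le_coherence {ψ ψ' : Fin n → E}
    (h : ∀ j l, j ≠ l → ‖(⟪ψ' j, ψ' l⟫_𝕜 : 𝕜)‖ ≤ ‖(⟪ψ j, ψ l⟫_𝕜 : 𝕜)‖) :
    coherence 𝕜 ψ' ≤ coherence 𝕜 ψ := by
  refine Real.sSup_le ?_ (coherence_nonneg ψ)
  rintro _ ⟨j, l, hjl, rfl⟩
  exact (h j l hjl).trans (norm_inner_le_coherence ψ hjl)

end Coherence

section Replace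

variable {𝕜 E ι κ : Type*} [RCLike 𝕜] [NormedAddCommGroup E] [InnerProductSpace 𝕜 E]
  {K : Submodule 𝕜 E} {g : κ → ι} {e : κ → E} {v : ι → E}

lemma norm_extend_eq_one (hg : Injective g) (he : ∀ a, ‖e a‖ = 1) (hv : ∀ j, ‖v j‖ = 1)
    (j : ι) : ‖extend g e v j‖ = 1 := by
  by_cases hj : ∃ a, g a = j
  · obtain ⟨a, rfl⟩ := hj
    rw [hg.extend_apply, he]
  · rw [extend_apply' _ _ _ hj, hv]

lemma norm_inner_extend_le (hg : Injective g) (he : Orthonormal 𝕜 e) (heK : ∀ a, e a ∈ Kᗮ)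
    (hvK : ∀ j, v j ∈ K) {j l : ι} (hjl : j ≠ l) :
    ‖(⟪extend g e v j, extend g e v l⟫_𝕜 : 𝕜)‖ ≤ ‖(⟪v j, v l⟫_𝕜 : 𝕜)‖ := by
  suffices h : (⟪extend g e v j, extend g e v l⟫_𝕜 : 𝕜) = 0 ∨
      extend g e v j = v j ∧ extend g e v l = v l by
    rcases h with h | ⟨hj, hl⟩
    · simp [h]
    · rw [hj, hl]
  by_cases hj : ∃ a, g a = j <;> by_cases hl : ∃ a, g a = l
  · obtain ⟨a, rfl⟩ := hj
    obtain ⟨b, rfl⟩ := hl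
    rw [hg.extend_apply, hg.extend_apply]
    exact .inl (he.2 fun hab => hjl (congrArg g hab))
  · obtain ⟨a, rfl⟩ := hj
    rw [hg.extend_apply, extend_apply' _ _ _ hl]
    exact .inl (K.inner_left_of_mem_orthogonal (hvK l) (heK a))
  · obtain ⟨b, rfl⟩ := hl
    rw [hg.extend_apply, extend_apply' _ _ _ hj]
    exact .inl (K.inner_right_of_mem_orthogonal (hvK j) (heK b))
  · exact .inr ⟨extend_apply' _ _ _ hj, extend_apply' _ _ _ hl⟩

lemma span_range_extend_eq_top [K.HasOrthogonalProjection] (hg : Injective g) {s : Set ι}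
    (hgs : ∀ a, g a ∉ s) (heK : Kᗮ ≤ span 𝕜 (Set.range e)) (hvK : K ≤ span 𝕜 (v '' s)) :
    span 𝕜 (Set.range (extend g e v)) = ⊤ := by
  have he : Set.range e ⊆ Set.range (extend g e v) := by
    rintro _ ⟨a, rfl⟩
    exact ⟨g a, hg.extend_apply _ _ _⟩
  have hv : v '' s ⊆ Set.range (extend g e v) := by
    rintro _ ⟨j, hj, rfl⟩
    exact ⟨j, extend_apply' _ _ _ fun ⟨a, ha⟩ => hgs a (ha ▸ hj)⟩
  rw [eq_top_iff, ← K.sup_orthogonal_of_hasOrthogonalProjection]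
  exact sup_le (hvK.trans (span_mono hv)) (heK.trans (span_mono he))

end Replace

section Frame

variable {𝕜 E : Type*} [RCLike 𝕜] [NormedAddCommGroup E] [InnerProductSpace 𝕜 E]

lemma exists_finset_card_eq_finrank_span_image_eq {ι : Type*} [Finite ι] (v : ι → E) :
    ∃ s : Finset ι, s.card = finrank 𝕜 (span 𝕜 (Set.range v)) ∧
      span 𝕜 (v '' s) = span 𝕜 (Set.range v) := by
  obtain ⟨b, -, -, hspan, hli⟩ :=
    exists_linearIndepOn_extension (linearIndepOn_empty 𝕜 v) (Set.empty_subset Set.univ)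
  have hb : b.Finite := b.toFinite
  have heq : span 𝕜 (v '' b) = span 𝕜 (Set.range v) :=
    le_antisymm (span_mono (Set.image_subset_range v b))
      (span_le.2 (Set.image_univ (f := v) ▸ hspan))
  refine ⟨hb.toFinset, ?_, by rw [hb.coe_toFinset, heq]⟩
  have := hb.fintype
  rw [← heq, Set.image_eq_range, finrank_span_eq_card hli, Set.Finite.card_toFinset]

theorem exists_span_eq_top_coherence_le [FiniteDimensional 𝕜 E] {n : ℕ}
    (hn : finrank 𝕜 E ≤ n) (ψ : Fin n → E) (hψ : ∀ j, ‖ψ j‖ = 1) :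
    ∃ ψ' : Fin n → E, (∀ j, ‖ψ' j‖ = 1) ∧
      span 𝕜 (Set.range ψ') = ⊤ ∧ coherence 𝕜 ψ' ≤ coherence 𝕜 ψ := by
  obtain ⟨s, hs, hspan⟩ := exists_finset_card_eq_finrank_span_image_eq (𝕜 := 𝕜) ψ
  set H := span 𝕜 (Set.range ψ)
  have hcard : Fintype.card (Fin (finrank 𝕜 Hᗮ)) ≤ Fintype.card (sᶜ : Finset (Fin n)) := by
    have := H.finrank_add_finrank_orthogonal
    simp only [Fintype.card_fin, Fintype.card_coe, Finset.card_compl]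
    omega
  obtain ⟨g⟩ := Embedding.nonempty_of_card_le hcard
  have hg : Injective (Subtype.val ∘ g) := Subtype.val_injective.comp g.injective
  set b := stdOrthonormalBasis 𝕜 Hᗮ
  have hb : span 𝕜 (Set.range (Hᗮ.subtype ∘ b)) = Hᗮ := by
    rw [Set.range_comp, ← map_span, ← b.coe_toBasis, b.toBasis.span_eq, map_subtype_top]
  refine ⟨extend (Subtype.val ∘ g) (Hᗮ.subtype ∘ b) ψ,
    norm_extend_eq_one hg (fun a => b.orthonormal.1 a) hψ,
    span_range_extend_eq_top hg (fun a => Finset.mem_compl.1 (g a).2) hb.ge hspan.ge,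
    coherence_le_coherence fun j l => ?_⟩
  exact norm_inner_extend_le hg (b.orthonormal.comp_linearIsometry Hᗮ.subtypeₗᵢ)
    (fun a => (b a).2) (fun i => subset_span ⟨i, rfl⟩)

end Frame

theorem rearrange_to_frame_general (𝕜 : Type*) [RCLike 𝕜] (m n k : ℕ)
    (hn : m + k ≤ n) (μ : ℝ)
    (φ : Fin n → EuclideanSpace 𝕜 (Fin m)) (hunit : ∀ j, ‖φ j‖ = 1)
    (hcoh : coherence 𝕜 φ = μ) :
    (∃ ψ : Fin n → EuclideanSpace 𝕜 (Fin m), (∀ j, ‖ψ j‖ = 1) ∧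
      Submodule.span 𝕜 (Set.range ψ) = ⊤ ∧ coherence 𝕜 ψ ≤ μ) ∧
    sInf {r : ℝ | ∃ ψ : Fin n → EuclideanSpace 𝕜 (Fin m), (∀ j, ‖ψ j‖ = 1) ∧
        Submodule.span 𝕜 (Set.range ψ) = ⊤ ∧ r = coherence 𝕜 ψ} =
      sInf {r : ℝ | ∃ ψ : Fin n → EuclideanSpace 𝕜 (Fin m), (∀ j, ‖ψ j‖ = 1) ∧
        r = coherence 𝕜 ψ} := by
  have hmn : finrank 𝕜 (EuclideanSpace 𝕜 (Fin m)) ≤ n := by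
    rw [finrank_euclideanSpace_fin]; omega
  refine ⟨?_, csInf_eq_csInf_of_forall_exists_le ?_ ?_⟩
  · obtain ⟨ψ, hψ, hspan, hle⟩ := exists_span_eq_top_coherence_le hmn φ hunit
    exact ⟨ψ, hψ, hspan, hcoh ▸ hle⟩
  · rintro _ ⟨ψ, hψ, -, rfl⟩
    exact ⟨_, ⟨ψ, hψ, rfl⟩, le_rfl⟩
  · rintro _ ⟨ψ, hψ, rfl⟩
    obtain ⟨ψ', hψ', hspan, hle⟩ := exists_span_eq_top_coherence_le hmn ψ hψ
    exact ⟨_, ⟨ψ', hψ', hspan, rfl⟩, hle⟩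

/-- Non-spanning minimally coherent configurations can be rearranged into frames with no
greater coherence; hence minimizing coherence over frames is the same as over all tuples of
unit vectors. -/
theorem rearrange_to_frame (𝕜 : Type*) [RCLike 𝕜] (m n k : ℕ) (hk : 1 ≤ k) (hkm : k < m)
    (hn : m + k ≤ n) (μ : ℝ) (hμ : μ < 1)
    (φ : Fin n → EuclideanSpace 𝕜 (Fin m)) (hunit : ∀ j, ‖φ j‖ = 1)
    (hcoh : coherence 𝕜 φ = μ)
    (hatt : ∃ j l : Fin n, j ≠ l ∧ ‖(⟪φ j, φ l⟫_𝕜 : 𝕜)‖ = μ)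
    (hspan : Module.finrank 𝕜 (Submodule.span 𝕜 (Set.range φ)) = m - k) :
    (∃ ψ : Fin n → EuclideanSpace 𝕜 (Fin m), (∀ j, ‖ψ j‖ = 1) ∧
      Submodule.span 𝕜 (Set.range ψ) = ⊤ ∧ coherence 𝕜 ψ ≤ μ) ∧
    sInf {r : ℝ | ∃ ψ : Fin n → EuclideanSpace 𝕜 (Fin m), (∀ j, ‖ψ j‖ = 1) ∧
        Submodule.span 𝕜 (Set.range ψ) = ⊤ ∧ r = coherence 𝕜 ψ} =
      sInf {r : ℝ | ∃ ψ : Fin n → EuclideanSpace 𝕜 (Fin m), (∀ j, ‖ψ j‖ = 1) ∧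
        r = coherence 𝕜 ψ} :=
  rearrange_to_frame_general 𝕜 m n k hn μ φ hunit hcoh
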